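/- arXiv:0908.0356 — 5 statements merged into one kernel-verified Lean document; each statement's English description precedes it below -/
import Mathlib

section
/- Let ν be a Lévy measure on ℝ and let β > 0, γ > 0, t > 0. Then ∫_0^t ( ∫_ℝ min( 1, (β e^{−γ s} y)² ) ν(dy) ) ds = (1/γ) ∫_{1/β}^{e^{γ t}/β} ( ψ₀(u)/u³ + ψ₁(u)/u ) du, where ψ₀(u) = ∫_{{|y| ≤ u}} y² ν(dy) and ψ₁(u) = ν({y : |y| > u}). -/
/-!
Substitute `u = e^{γ s} / β`, so that `β e^{-γ s} y = y / u` and `ds = du / (γ u)`. For fixed `u`,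
splitting `ℝ` at `|y| = u` gives `∫ min(1, (y/u)²) dν = ψ₀(u)/u² + ψ₁(u)`, and dividing by `γ u`
yields the integrand on the right.
-/

open MeasureTheory Set
open scoped ENNReal

lemma min_one_sq_div_of_abs_le {y u : ℝ} (hu : 0 < u) (hy : |y| ≤ u) :
    min 1 ((y / u) ^ 2) = y ^ 2 / u ^ 2 := by
  have : (y / u) ^ 2 ≤ 1 := by
    rw [sq_le_one_iff_abs_le_one, abs_div, abs_of_pos hu]
    exact div_le_one_of_le₀ hy hu.le
  rw [min_eq_right this, div_pow]

lemma min_one_sq_div_of_lt_abs {y u : ℝ} (hu : 0 < u) (hy : u < |y|) :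
    min 1 ((y / u) ^ 2) = 1 := by
  have : 1 < |y / u| := by rwa [abs_div, abs_of_pos hu, one_lt_div hu]
  exact min_eq_left (one_lt_sq_iff_one_lt_abs _ |>.mpr this).le

lemma lintegral_min_one_sq_div_eq (ν : Measure ℝ) {u : ℝ} (hu : 0 < u) :
    ∫⁻ y, ENNReal.ofReal (min 1 ((y / u) ^ 2)) ∂ν
      = (∫⁻ y in {y : ℝ | |y| ≤ u}, ENNReal.ofReal (y ^ 2) ∂ν) / ENNReal.ofReal (u ^ 2)
        + ν {y : ℝ | u < |y|} := by
  have hmeas : MeasurableSet {y : ℝ | |y| ≤ u} := measurableSet_le measurable_abs measurable_const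
  have hcompl : {y : ℝ | |y| ≤ u}ᶜ = {y : ℝ | u < |y|} := by ext; simp
  rw [← lintegral_add_compl _ hmeas, hcompl]
  congr 1
  · rw [setLIntegral_congr_fun hmeas fun y hy => by
      rw [min_one_sq_div_of_abs_le hu hy, ENNReal.ofReal_div_of_pos (by positivity)]]
    simp_rw [div_eq_mul_inv]
    exact lintegral_mul_const' _ _ (by simp [hu.ne'])
  · rw [setLIntegral_congr_fun (hcompl ▸ hmeas.compl) fun y hy => by
      rw [min_one_sq_div_of_lt_abs hu hy, ENNReal.ofReal_one]]
    simp

lemma ENNReal.ofReal_mul_div_pow_three_add_div {u : ℝ} (hu : 0 < u) (A B : ℝ≥0∞) :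
    ENNReal.ofReal u * (A / ENNReal.ofReal (u ^ 3) + B / ENNReal.ofReal u)
      = A / ENNReal.ofReal (u ^ 2) + B := by
  set a := ENNReal.ofReal u
  have ha : a * a⁻¹ = 1 := ENNReal.mul_inv_cancel (by simp [a, hu]) ENNReal.ofReal_ne_top
  simp only [ENNReal.ofReal_pow hu.le, div_eq_mul_inv, ENNReal.inv_pow]
  calc a * (A * a⁻¹ ^ 3 + B * a⁻¹) = (a * a⁻¹) * (A * a⁻¹ ^ 2) + (a * a⁻¹) * B := by ring
    _ = A * a⁻¹ ^ 2 + B := by rw [ha, one_mul, one_mul]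

theorem integral_min_one_sq_eq_general
    (ν : Measure ℝ)
    (β γ t : ℝ) (hβ : 0 < β) (hγ : 0 < γ) :
    ∫⁻ s in Set.Ioc (0 : ℝ) t,
        (∫⁻ y : ℝ, ENNReal.ofReal (min 1 ((β * Real.exp (-γ * s) * y) ^ 2)) ∂ν)
      = ENNReal.ofReal (1 / γ)
          * ∫⁻ u in Set.Ioc (1 / β) (Real.exp (γ * t) / β),
              ((∫⁻ y in {y : ℝ | |y| ≤ u}, ENNReal.ofReal (y ^ 2) ∂ν)
                  / ENNReal.ofReal (u ^ 3)
                + ν {y : ℝ | u < |y|} / ENNReal.ofReal u) := by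
  set φ : ℝ → ℝ := fun s => Real.exp (γ * s) / β
  have hφ_pos (s : ℝ) : 0 < φ s := by positivity
  have hφ_deriv (s : ℝ) : HasDerivAt φ (γ * φ s) s := by
    simpa [φ, mul_div_assoc, mul_comm] using
      (((hasDerivAt_id s).const_mul γ).exp).div_const β
  have hφ_mono : StrictMono φ := strictMono_of_deriv_pos fun s => by
    rw [(hφ_deriv s).deriv]; exact mul_pos hγ (hφ_pos s)
  have hφ_image : φ '' Ioc 0 t = Ioc (1 / β) (Real.exp (γ * t) / β) := by
    rw [(continuous_iff_continuousAt.2 fun s => (hφ_deriv s).continuousAt).image_Ioc_of_strictMono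
      hφ_mono]
    simp [φ]
  rw [← hφ_image, lintegral_image_eq_lintegral_abs_deriv_mul measurableSet_Ioc
    (fun s _ => (hφ_deriv s).hasDerivWithinAt) hφ_mono.injective.injOn,
    ← lintegral_const_mul' _ _ ENNReal.ofReal_ne_top]
  refine setLIntegral_congr_fun measurableSet_Ioc fun s _ => ?_
  have hscale (y : ℝ) : β * Real.exp (-γ * s) * y = y / φ s := by
    simp only [φ, neg_mul, Real.exp_neg]
    field_simp
  simp_rw [hscale, lintegral_min_one_sq_div_eq ν (hφ_pos s), abs_of_pos (mul_pos hγ (hφ_pos s)),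
    ← mul_assoc, ← ENNReal.ofReal_mul (one_div_pos.2 hγ).le, one_div, inv_mul_cancel_left₀ hγ.ne']
  exact (ENNReal.ofReal_mul_div_pow_three_add_div (hφ_pos s) _ _).symm

/-- The change-of-variables identity
`∫_0^t ∫_ℝ min(1, (β e^{−γs} y)²) dν ds = (1/γ) ∫_{1/β}^{e^{γt}/β} (ψ₀(u)/u³ + ψ₁(u)/u) du`. -/
theorem integral_min_one_sq_eq
    (ν : Measure ℝ) [SigmaFinite ν]
    (hν0 : ν {0} = 0)
    (hνI : ∫⁻ y : ℝ, ENNReal.ofReal (min 1 (y ^ 2)) ∂ν ≠ ⊤)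
    (β γ t : ℝ) (hβ : 0 < β) (hγ : 0 < γ) (ht : 0 < t) :
    ∫⁻ s in Set.Ioc (0 : ℝ) t,
        (∫⁻ y : ℝ, ENNReal.ofReal (min 1 ((β * Real.exp (-γ * s) * y) ^ 2)) ∂ν)
      = ENNReal.ofReal (1 / γ)
          * ∫⁻ u in Set.Ioc (1 / β) (Real.exp (γ * t) / β),
              ((∫⁻ y in {y : ℝ | |y| ≤ u}, ENNReal.ofReal (y ^ 2) ∂ν)
                  / ENNReal.ofReal (u ^ 3)
                + ν {y : ℝ | u < |y|} / ENNReal.ofReal u) :=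
  integral_min_one_sq_eq_general ν β γ t hβ hγ
end

section
/- Let ν be a Lévy measure on ℝ and let (β_n)_{n≥1}, (γ_n)_{n≥1} be positive real numbers. If there exists t₀ > 0 such that ∑_{n≥1} (1/γ_n) ∫_{1/β_n}^{e^{γ_n t₀}/β_n} ( ψ₀(u)/u³ + ψ₁(u)/u ) du < ∞, then for every t > 0 one has ∑_{n≥1} (1/γ_n) ∫_{1/β_n}^{e^{γ_n t}/β_n} ( ψ₀(u)/u³ + ψ₁(u)/u ) du < ∞, where ψ₀(u) = ∫_{{|y| ≤ u}} y² ν(dy) and ψ₁(u) = ν({y : |y| > u}). -/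
/-!
Write `F(u) = ψ₀(u)/u³ + ψ₁(u)/u`. The function `u F(u) = ∫ min(y²/u², 1) ν(dy)` is
nonincreasing, so `c F(cu) ≤ F(u)` for `c ≥ 1`: the integral of `F` over a dilate `(ca, cb]`
of `(a, b]`, `a > 0`, is at most the integral over `(a, b]`. For `k ≥ t/t₀`, the interval
`(1/βₙ, e^{γₙ t}/βₙ]` is covered by `k` dilates of `(1/βₙ, e^{γₙ t₀}/βₙ]`, so the `n`-th
term of the series for `t` is at most `k` times the `n`-th term for `t₀`.
-/

open MeasureTheory Set
open scoped ENNReal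

theorem setLIntegral_Ioc_const_mul (f : ℝ → ℝ≥0∞) {c : ℝ} (hc : 0 < c) (a b : ℝ) :
    ∫⁻ u in Ioc (c * a) (c * b), f u = ENNReal.ofReal c * ∫⁻ x in Ioc a b, f (c * x) := by
  have he := measurableEmbedding_mulLeft₀ hc.ne'
  conv_lhs => rw [← Real.smul_map_volume_mul_left hc.ne']
  rw [Measure.restrict_smul, lintegral_smul_measure, abs_of_pos hc, he.restrict_map,
    he.lintegral_map, preimage_const_mul_Ioc₀ _ _ hc, mul_div_cancel_left₀ _ hc.ne',
    mul_div_cancel_left₀ _ hc.ne', smul_eq_mul]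

section ScaleInvariant

variable {f : ℝ → ℝ≥0∞} (hf : AntitoneOn (fun u ↦ ENNReal.ofReal u * f u) (Ioi 0))
include hf

theorem ofReal_mul_apply_const_mul_le {c u : ℝ} (hc : 1 ≤ c) (hu : 0 < u) :
    ENNReal.ofReal c * f (c * u) ≤ f u := by
  have hcu : ENNReal.ofReal (c * u) * f (c * u) ≤ ENNReal.ofReal u * f u :=
    hf hu (mul_pos (one_pos.trans_le hc) hu) (le_mul_of_one_le_left hu.le hc)
  rw [ENNReal.ofReal_mul (zero_le_one.trans hc), mul_right_comm,
    mul_comm (ENNReal.ofReal u)] at hcu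
  exact (ENNReal.mul_le_mul_iff_left (by simpa using hu) ENNReal.ofReal_ne_top).mp hcu

theorem setLIntegral_Ioc_const_mul_le {a c : ℝ} (ha : 0 < a) (hc : 1 ≤ c) (b : ℝ) :
    ∫⁻ u in Ioc (c * a) (c * b), f u ≤ ∫⁻ u in Ioc a b, f u := by
  rw [setLIntegral_Ioc_const_mul f (one_pos.trans_le hc),
    ← lintegral_const_mul' _ _ ENNReal.ofReal_ne_top]
  exact setLIntegral_mono' measurableSet_Ioc fun x hx ↦
    ofReal_mul_apply_const_mul_le hf hc (ha.trans hx.1)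

theorem setLIntegral_Ioc_pow_mul_le {a T : ℝ} (ha : 0 < a) (hT : 1 ≤ T) (k : ℕ) :
    ∫⁻ u in Ioc a (T ^ k * a), f u ≤ k * ∫⁻ u in Ioc a (T * a), f u := by
  induction k with
  | zero => simp
  | succ k ih =>
    have hTk : 1 ≤ T ^ k := one_le_pow₀ hT
    rw [← Ioc_union_Ioc_eq_Ioc (le_mul_of_one_le_left ha.le hTk)
      (mul_le_mul_of_nonneg_right (pow_le_pow_right₀ hT k.le_succ) ha.le)]
    have hstep :
        ∫⁻ u in Ioc (T ^ k * a) (T ^ (k + 1) * a), f u ≤ ∫⁻ u in Ioc a (T * a), f u := by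
      rw [pow_succ, mul_assoc]
      exact setLIntegral_Ioc_const_mul_le hf ha hTk _
    calc _ ≤ _ := lintegral_union_le _ _ _
      _ ≤ k * (∫⁻ u in Ioc a (T * a), f u) + ∫⁻ u in Ioc a (T * a), f u :=
        add_le_add ih hstep
      _ = (k + 1 : ℕ) * ∫⁻ u in Ioc a (T * a), f u := by push_cast; ring

theorem setLIntegral_Ioc_exp_div_le {β γ t t₀ : ℝ} (hβ : 0 < β) (hγ : 0 ≤ γ) (ht₀ : 0 ≤ t₀)
    {k : ℕ} (hk : t ≤ k * t₀) :
    ∫⁻ u in Ioc (1 / β) (Real.exp (γ * t) / β), f u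
      ≤ k * ∫⁻ u in Ioc (1 / β) (Real.exp (γ * t₀) / β), f u := by
  have hexp : Real.exp (γ * t) ≤ Real.exp (γ * t₀) ^ k := by
    rw [← Real.exp_nat_mul, Real.exp_le_exp]
    nlinarith
  rw [← mul_one_div (Real.exp (γ * t₀))]
  calc _ ≤ ∫⁻ u in Ioc (1 / β) (Real.exp (γ * t₀) ^ k * (1 / β)), f u := by
        gcongr
        rw [mul_one_div]
        gcongr
    _ ≤ _ := setLIntegral_Ioc_pow_mul_le hf (by positivity) (Real.one_le_exp (by positivity)) k

end ScaleInvariant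

section LevyDensity

variable (ν : Measure ℝ)

noncomputable def truncSecondMoment (u : ℝ) : ℝ≥0∞ :=
  ∫⁻ y in {y : ℝ | |y| ≤ u}, ENNReal.ofReal (y ^ 2) ∂ν

noncomputable def tailMass (u : ℝ) : ℝ≥0∞ := ν {y : ℝ | u < |y|}

noncomputable def levyDensity (u : ℝ) : ℝ≥0∞ :=
  truncSecondMoment ν u / ENNReal.ofReal (u ^ 3) + tailMass ν u / ENNReal.ofReal u

theorem lintegral_min_sq_div_sq_one {u : ℝ} (hu : 0 < u) :
    ∫⁻ y, min (ENNReal.ofReal (y ^ 2 / u ^ 2)) 1 ∂ν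
      = truncSecondMoment ν u / ENNReal.ofReal (u ^ 2) + tailMass ν u := by
  have hs : MeasurableSet {y : ℝ | |y| ≤ u} := measurableSet_le measurable_abs measurable_const
  have hsc : {y : ℝ | |y| ≤ u}ᶜ = {y : ℝ | u < |y|} := by ext; simp
  have hu2 : 0 < u ^ 2 := by positivity
  rw [← lintegral_add_compl _ hs, hsc, truncSecondMoment, tailMass, div_eq_mul_inv,
    ← lintegral_mul_const' _ _ (ENNReal.inv_ne_top.2 (ENNReal.ofReal_pos.2 hu2).ne'),
    ← setLIntegral_one]
  congr 1
  · refine setLIntegral_congr_fun hs fun y hy ↦ ?_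
    have hyu : y ^ 2 ≤ u ^ 2 := by nlinarith [abs_nonneg y, sq_abs y, hy.out]
    rw [min_eq_left (ENNReal.ofReal_le_one.2 (div_le_one_of_le₀ hyu hu2.le)),
      ENNReal.ofReal_div_of_pos hu2, div_eq_mul_inv]
  · refine setLIntegral_congr_fun (measurableSet_lt measurable_const measurable_abs)
      fun y hy ↦ ?_
    have huy : u ^ 2 ≤ y ^ 2 := by nlinarith [abs_nonneg y, sq_abs y, hy.out]
    exact min_eq_right (ENNReal.one_le_ofReal.2 ((one_le_div hu2).2 huy))

theorem ofReal_mul_levyDensity {u : ℝ} (hu : 0 < u) :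
    ENNReal.ofReal u * levyDensity ν u
      = truncSecondMoment ν u / ENNReal.ofReal (u ^ 2) + tailMass ν u := by
  have h0 : ENNReal.ofReal u ≠ 0 := (ENNReal.ofReal_pos.2 hu).ne'
  rw [levyDensity, mul_add, ← mul_div_assoc, pow_succ', ENNReal.ofReal_mul hu.le,
    ENNReal.mul_div_mul_left _ _ h0 ENNReal.ofReal_ne_top,
    ENNReal.mul_div_cancel h0 ENNReal.ofReal_ne_top]

theorem antitoneOn_ofReal_mul_levyDensity :
    AntitoneOn (fun u ↦ ENNReal.ofReal u * levyDensity ν u) (Ioi 0) := by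
  intro u (hu : 0 < u) v (hv : 0 < v) huv
  simp only [ofReal_mul_levyDensity ν hu, ofReal_mul_levyDensity ν hv,
    ← lintegral_min_sq_div_sq_one ν hu, ← lintegral_min_sq_div_sq_one ν hv]
  gcongr

end LevyDensity

theorem sum_finite_for_all_t_of_finite_for_some_t_general
    (ν : Measure ℝ)
    (β γ : ℕ → ℝ) (hβ : ∀ n, 0 < β n) (hγ : ∀ n, 0 < γ n)
    (h : ∃ t₀ > (0 : ℝ),
      (∑' n, ENNReal.ofReal (1 / γ n)
          * ∫⁻ u in Set.Ioc (1 / β n) (Real.exp (γ n * t₀) / β n),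
              ((∫⁻ y in {y : ℝ | |y| ≤ u}, ENNReal.ofReal (y ^ 2) ∂ν)
                  / ENNReal.ofReal (u ^ 3)
                + ν {y : ℝ | u < |y|} / ENNReal.ofReal u)) ≠ ⊤) :
    ∀ t > (0 : ℝ),
      (∑' n, ENNReal.ofReal (1 / γ n)
          * ∫⁻ u in Set.Ioc (1 / β n) (Real.exp (γ n * t) / β n),
              ((∫⁻ y in {y : ℝ | |y| ≤ u}, ENNReal.ofReal (y ^ 2) ∂ν)
                  / ENNReal.ofReal (u ^ 3)
                + ν {y : ℝ | u < |y|} / ENNReal.ofReal u)) ≠ ⊤ := by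
  obtain ⟨t₀, ht₀, hfin⟩ := h
  intro t _
  obtain ⟨k, hk⟩ := exists_nat_ge (t / t₀)
  have hkt : t ≤ k * t₀ := (div_le_iff₀ ht₀).1 hk
  refine ne_top_of_le_ne_top (ENNReal.mul_ne_top (ENNReal.natCast_ne_top k) hfin) ?_
  rw [← ENNReal.tsum_mul_left]
  refine ENNReal.tsum_le_tsum fun n ↦ ?_
  rw [mul_left_comm]
  gcongr
  exact setLIntegral_Ioc_exp_div_le (antitoneOn_ofReal_mul_levyDensity ν) (hβ n) (hγ n).le
    ht₀.le hkt

/-- If the series `∑ (1/γ_n) ∫_{1/β_n}^{e^{γ_n t₀}/β_n} (ψ₀(u)/u³ + ψ₁(u)/u) du` is finite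
for some `t₀ > 0`, then it is finite for every `t > 0`. -/
theorem sum_finite_for_all_t_of_finite_for_some_t
    (ν : Measure ℝ) [SigmaFinite ν]
    (hν0 : ν {0} = 0)
    (hνI : ∫⁻ y : ℝ, ENNReal.ofReal (min 1 (y ^ 2)) ∂ν ≠ ⊤)
    (β γ : ℕ → ℝ) (hβ : ∀ n, 0 < β n) (hγ : ∀ n, 0 < γ n)
    (h : ∃ t₀ > (0 : ℝ),
      (∑' n, ENNReal.ofReal (1 / γ n)
          * ∫⁻ u in Set.Ioc (1 / β n) (Real.exp (γ n * t₀) / β n),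
              ((∫⁻ y in {y : ℝ | |y| ≤ u}, ENNReal.ofReal (y ^ 2) ∂ν)
                  / ENNReal.ofReal (u ^ 3)
                + ν {y : ℝ | u < |y|} / ENNReal.ofReal u)) ≠ ⊤) :
    ∀ t > (0 : ℝ),
      (∑' n, ENNReal.ofReal (1 / γ n)
          * ∫⁻ u in Set.Ioc (1 / β n) (Real.exp (γ n * t) / β n),
              ((∫⁻ y in {y : ℝ | |y| ≤ u}, ENNReal.ofReal (y ^ 2) ∂ν)
                  / ENNReal.ofReal (u ^ 3)
                + ν {y : ℝ | u < |y|} / ENNReal.ofReal u)) ≠ ⊤ :=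
  sum_finite_for_all_t_of_finite_for_some_t_general ν β γ hβ hγ h
end

section
/- Let ν be a Lévy measure on ℝ and let b ≥ 1. Then ∫_1^b ψ₀(u)/u³ du = (1/2) ( ν({y : 1 < |y| ≤ b}) + ∫_{{|y| ≤ 1}} y² ν(dy) − (1/b²) ∫_{{|y| ≤ b}} y² ν(dy) ), where ψ₀(u) = ∫_{{|y| ≤ u}} y² ν(dy). -/
/-!
Write `ψ₀(u) / u³` as `∫ 1{|y| ≤ u} y² / u³ dν(y)` and swap the integrals; on `(1, b] × ℝ` the
integrand is dominated by `1{|y| ≤ b} y²`, which is `ν`-integrable. For `|y| ≤ b` the inner integral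
is `∫_{max(1,|y|)}^b y² / u³ du = (min(1, y²) - y² / b²) / 2`, and the integral of `min(1, y²)` over
`{|y| ≤ b}` splits into `∫_{|y| ≤ 1} y² dν` and `ν{1 < |y| ≤ b}`.
-/

open MeasureTheory Set Function

lemma integral_Ioc_inv_pow_three {a b : ℝ} (ha : 0 < a) (hab : a ≤ b) :
    ∫ u in Ioc a b, (u ^ 3)⁻¹ = ((a ^ 2)⁻¹ - (b ^ 2)⁻¹) / 2 := by
  have hne : ∀ u ∈ uIcc a b, u ≠ 0 := fun u hu => by
    rw [uIcc_of_le hab] at hu; exact (ha.trans_le hu.1).ne'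
  have hderiv : ∀ u ∈ uIcc a b, HasDerivAt (fun u : ℝ => -(u ^ 2)⁻¹ / 2) ((u ^ 3)⁻¹) u := by
    intro u hu
    refine (((hasDerivAt_pow 2 u).inv (pow_ne_zero 2 (hne u hu))).neg.div_const 2).congr_deriv ?_
    have hu0 := hne u hu
    field_simp
    norm_num
    ring
  rw [← intervalIntegral.integral_of_le hab, intervalIntegral.integral_eq_sub_of_hasDerivAt hderiv]
  · ring
  · exact ContinuousOn.intervalIntegrable fun u hu =>
      ((continuousAt_id.pow 3).inv₀ (pow_ne_zero 3 (hne u hu))).continuousWithinAt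

lemma sq_div_max_one_abs_sq (y : ℝ) : y ^ 2 / max 1 |y| ^ 2 = min 1 (y ^ 2) := by
  rcases le_total |y| 1 with h | h
  · rw [max_eq_left h, min_eq_right ((sq_le_one_iff_abs_le_one y).2 h), one_pow, div_one]
  · have hy : 1 ≤ y ^ 2 := (one_le_sq_iff_one_le_abs y).2 h
    rw [max_eq_right h, sq_abs, min_eq_left hy, div_self (one_pos.trans_le hy).ne']

lemma integral_Ioc_one_ite_div_pow_three {b y : ℝ} (hb : 1 ≤ b) (hy : |y| ≤ b) :
    ∫ u in Ioc 1 b, (if |y| ≤ u then y ^ 2 / u ^ 3 else 0)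
      = (min 1 (y ^ 2) - y ^ 2 / b ^ 2) / 2 := by
  have hset : (Ioc 1 b ∩ Ici |y| : Set ℝ) =ᵐ[volume] Ioc (max 1 |y|) b := by
    rw [← Ioc_inter_Ioi]
    exact Filter.EventuallyEq.rfl.inter Ioi_ae_eq_Ici.symm
  calc ∫ u in Ioc 1 b, (if |y| ≤ u then y ^ 2 / u ^ 3 else 0)
      = ∫ u in Ioc 1 b, (Ici |y|).indicator (fun u => y ^ 2 * (u ^ 3)⁻¹) u := by
        simp only [indicator_apply, mem_Ici, div_eq_mul_inv]
    _ = y ^ 2 * ∫ u in Ioc (max 1 |y|) b, (u ^ 3)⁻¹ := by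
        rw [setIntegral_indicator measurableSet_Ici, setIntegral_congr_set hset, integral_const_mul]
    _ = (min 1 (y ^ 2) - y ^ 2 / b ^ 2) / 2 := by
        rw [integral_Ioc_inv_pow_three (by positivity) (max_le hb hy), ← sq_div_max_one_abs_sq]
        ring

lemma integral_Ioc_integral_abs_le_sq_div_pow_three {ν : Measure ℝ} [SFinite ν] {b : ℝ}
    (hb : 1 ≤ b) (hν : IntegrableOn (fun y => y ^ 2) {y | |y| ≤ b} ν) :
    ∫ u in Ioc 1 b, (∫ y in {y : ℝ | |y| ≤ u}, y ^ 2 ∂ν) / u ^ 3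
      = ∫ y in {y : ℝ | |y| ≤ b}, (min 1 (y ^ 2) - y ^ 2 / b ^ 2) / 2 ∂ν := by
  set K : ℝ → ℝ → ℝ := fun u y => if |y| ≤ u then y ^ 2 / u ^ 3 else 0 with hK
  have hball : ∀ u : ℝ, MeasurableSet {y : ℝ | |y| ≤ u} :=
    fun u => measurableSet_le measurable_abs measurable_const
  have hK_meas : Measurable (uncurry K) :=
    Measurable.ite (measurableSet_le (by fun_prop) (by fun_prop)) (by fun_prop) measurable_const
  have hK_bound : ∀ᵐ p ∂(volume.restrict (Ioc 1 b)).prod ν,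
      ‖uncurry K p‖ ≤ {y : ℝ | |y| ≤ b}.indicator (fun y => y ^ 2) p.2 := by
    rw [Measure.restrict_prod_eq_prod_univ]
    refine ae_restrict_of_forall_mem (measurableSet_Ioc.prod MeasurableSet.univ) ?_
    rintro ⟨u, y⟩ ⟨⟨hu1, hub⟩, -⟩
    by_cases hyu : |y| ≤ u
    · have hu3 : 1 ≤ u ^ 3 := one_le_pow₀ hu1.le
      simp only [uncurry_apply_pair, hK, if_pos hyu]
      rw [indicator_of_mem (s := {y : ℝ | |y| ≤ b}) (hyu.trans hub),
        Real.norm_of_nonneg (by positivity)]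
      exact div_le_self (sq_nonneg y) hu3
    · simp only [uncurry_apply_pair, hK, if_neg hyu, norm_zero]
      exact indicator_nonneg (fun y _ => sq_nonneg y) y
  have hK_int : Integrable (uncurry K) ((volume.restrict (Ioc 1 b)).prod ν) :=
    ((hν.integrable_indicator (hball b)).comp_snd _).mono' hK_meas.aestronglyMeasurable hK_bound
  have hK_inner : ∀ y, ∫ u in Ioc 1 b, K u y
      = {y : ℝ | |y| ≤ b}.indicator (fun y => (min 1 (y ^ 2) - y ^ 2 / b ^ 2) / 2) y := by
    intro y
    by_cases hy : |y| ≤ b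
    · rw [indicator_of_mem (s := {y : ℝ | |y| ≤ b}) hy]
      exact integral_Ioc_one_ite_div_pow_three hb hy
    · rw [indicator_of_notMem (s := {y : ℝ | |y| ≤ b}) hy]
      exact setIntegral_eq_zero_of_forall_eq_zero fun u hu =>
        if_neg fun hyu => hy (hyu.trans hu.2)
  calc ∫ u in Ioc 1 b, (∫ y in {y : ℝ | |y| ≤ u}, y ^ 2 ∂ν) / u ^ 3
      = ∫ u in Ioc 1 b, ∫ y, K u y ∂ν := by
        refine setIntegral_congr_fun measurableSet_Ioc fun u _ => ?_
        rw [← integral_div, ← integral_indicator (hball u)]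
        rfl
    _ = ∫ y, (∫ u in Ioc 1 b, K u y) ∂ν := integral_integral_swap hK_int
    _ = _ := by simp only [hK_inner, integral_indicator (hball b)]

lemma integrable_min_one_sq_of_lintegral_ne_top {ν : Measure ℝ}
    (hν : ∫⁻ y : ℝ, ENNReal.ofReal (min 1 (y ^ 2)) ∂ν ≠ ⊤) :
    Integrable (fun y : ℝ => min 1 (y ^ 2)) ν :=
  (lintegral_ofReal_ne_top_iff_integrable (by fun_prop)
    (ae_of_all _ fun y => le_min zero_le_one (sq_nonneg y))).1 hν

lemma integrableOn_sq_abs_le_of_lintegral_ne_top {ν : Measure ℝ}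
    (hν : ∫⁻ y : ℝ, ENNReal.ofReal (min 1 (y ^ 2)) ∂ν ≠ ⊤) (b : ℝ) :
    IntegrableOn (fun y : ℝ => y ^ 2) {y | |y| ≤ b} ν := by
  have hmin := integrable_min_one_sq_of_lintegral_ne_top hν
  refine (hmin.const_mul (max 1 (b ^ 2))).integrableOn.mono' (by fun_prop)
    (ae_restrict_of_forall_mem (measurableSet_le measurable_abs measurable_const) ?_)
  intro y (hy : |y| ≤ b)
  rw [Real.norm_of_nonneg (sq_nonneg y)]
  rcases le_total (y ^ 2) 1 with h | h
  · rw [min_eq_right h]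
    exact le_mul_of_one_le_left (sq_nonneg y) (le_max_left _ _)
  · rw [min_eq_left h, mul_one, ← sq_abs y]
    exact (pow_le_pow_left₀ (abs_nonneg y) hy 2).trans (le_max_right _ _)

lemma setIntegral_abs_le_min_one_sq {ν : Measure ℝ}
    (hν : ∫⁻ y : ℝ, ENNReal.ofReal (min 1 (y ^ 2)) ∂ν ≠ ⊤) {b : ℝ} (hb : 1 ≤ b) :
    ∫ y in {y : ℝ | |y| ≤ b}, min 1 (y ^ 2) ∂ν
      = ∫ y in {y : ℝ | |y| ≤ 1}, y ^ 2 ∂ν + (ν {y : ℝ | 1 < |y| ∧ |y| ≤ b}).toReal := by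
  have hsplit : {y : ℝ | |y| ≤ b} = {y : ℝ | |y| ≤ 1} ∪ {y : ℝ | 1 < |y| ∧ |y| ≤ b} := by
    ext y
    simp only [mem_union, mem_ofPred_eq]
    grind
  have hdisj : Disjoint {y : ℝ | |y| ≤ 1} {y : ℝ | 1 < |y| ∧ |y| ≤ b} :=
    disjoint_left.2 fun y h1 h2 => h2.1.not_ge h1
  have hshell : MeasurableSet {y : ℝ | 1 < |y| ∧ |y| ≤ b} :=
    (measurableSet_lt measurable_const measurable_abs).inter
      (measurableSet_le measurable_abs measurable_const)
  have hmin := integrable_min_one_sq_of_lintegral_ne_top hν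
  rw [hsplit, setIntegral_union hdisj hshell hmin.integrableOn hmin.integrableOn]
  congr 1
  · exact setIntegral_congr_fun (measurableSet_le measurable_abs measurable_const) fun y hy =>
      min_eq_right ((sq_le_one_iff_abs_le_one y).2 hy)
  · rw [setIntegral_congr_fun hshell fun y hy =>
        min_eq_left ((one_le_sq_iff_one_le_abs y).2 hy.1.le),
      setIntegral_const, smul_eq_mul, mul_one, measureReal_def]

theorem integral_small_jumps_div_eq_general
    (ν : Measure ℝ) [SigmaFinite ν]
    (hνI : ∫⁻ y : ℝ, ENNReal.ofReal (min 1 (y ^ 2)) ∂ν ≠ ⊤)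
    (b : ℝ) (hb : 1 ≤ b) :
    ∫ u in Set.Ioc (1 : ℝ) b, (∫ y in {y : ℝ | |y| ≤ u}, y ^ 2 ∂ν) / u ^ 3
      = (1 / 2) * ((ν {y : ℝ | 1 < |y| ∧ |y| ≤ b}).toReal
          + (∫ y in {y : ℝ | |y| ≤ 1}, y ^ 2 ∂ν)
          - (1 / b ^ 2) * ∫ y in {y : ℝ | |y| ≤ b}, y ^ 2 ∂ν) := by
  have hsq := integrableOn_sq_abs_le_of_lintegral_ne_top hνI b
  rw [integral_Ioc_integral_abs_le_sq_div_pow_three hb hsq, integral_div,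
    integral_sub (integrable_min_one_sq_of_lintegral_ne_top hνI).integrableOn (hsq.div_const _),
    integral_div, setIntegral_abs_le_min_one_sq hνI hb]
  ring

/-- `∫_1^b ψ₀(u)/u³ du = (1/2)(ν{1<|y|≤b} + ∫_{|y|≤1} y² dν − (1/b²) ∫_{|y|≤b} y² dν)`. -/
theorem integral_small_jumps_div_eq
    (ν : Measure ℝ) [SigmaFinite ν]
    (hν0 : ν {0} = 0)
    (hνI : ∫⁻ y : ℝ, ENNReal.ofReal (min 1 (y ^ 2)) ∂ν ≠ ⊤)
    (b : ℝ) (hb : 1 ≤ b) :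
    ∫ u in Set.Ioc (1 : ℝ) b, (∫ y in {y : ℝ | |y| ≤ u}, y ^ 2 ∂ν) / u ^ 3
      = (1 / 2) * ((ν {y : ℝ | 1 < |y| ∧ |y| ≤ b}).toReal
          + (∫ y in {y : ℝ | |y| ≤ 1}, y ^ 2 ∂ν)
          - (1 / b ^ 2) * ∫ y in {y : ℝ | |y| ≤ b}, y ^ 2 ∂ν) :=
  integral_small_jumps_div_eq_general ν hνI b hb
end

section
/- Let ν be a Lévy measure on ℝ satisfying the logarithmic moment condition ∫_{{|y| > 1}} log|y| ν(dy) < ∞. Then for every b ≥ 1, ∫_1^b ( ψ₀(u)/u³ + ψ₁(u)/u ) du ≤ 2 ∫_{{|y| > 1}} log|y| ν(dy) + ν({y : |y| > 1}) + ∫_{{|y| ≤ 1}} y² ν(dy); in particular sup_{b ≥ 1} ∫_1^b ( ψ₀(u)/u³ + ψ₁(u)/u ) du < ∞. Here ψ₀(u) = ∫_{{|y| ≤ u}} y² ν(dy) and ψ₁(u) = ν({y : |y| > u}). -/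
/-!
By Tonelli, `∫₁ᵇ ψ₀(u) u⁻³ du = ∫ y² ∫_{[1,b] ∩ [|y|,∞)} u⁻³ du ν(dy)`, which is bounded by
`∫ y² / (2 max(1,|y|)²) ν(dy)` and hence by `∫ min(1, y²) dν = ∫_{|y|≤1} y² dν + ν{|y|>1}`, and
`∫₁ᵇ ψ₁(u) u⁻¹ du = ∫ ∫_{(1, min(b,|y|))} u⁻¹ du ν(dy) ≤ ∫_{|y|>1} log|y| dν`.
Both estimates are made for the `ℝ≥0∞`-valued versions of `ψ₀` and `ψ₁`, which dominate the
real-valued integrand.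
-/

open MeasureTheory Set
open scoped ENNReal

section Tonelli

variable {α β : Type*} [MeasurableSpace α] [MeasurableSpace β] {μ : Measure α} {ν : Measure β}
  [SFinite μ] [SFinite ν]

theorem lintegral_setLIntegral_mul_swap {r : α → β → Prop}
    (hr : MeasurableSet {p : α × β | r p.1 p.2}) {f : β → ℝ≥0∞} {g : α → ℝ≥0∞}
    (hf : Measurable f) (hg : Measurable g) :
    ∫⁻ x, (∫⁻ y in {y | r x y}, f y ∂ν) * g x ∂μ
      = ∫⁻ y, f y * ∫⁻ x in {x | r x y}, g x ∂μ ∂ν := by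
  set F : α × β → ℝ≥0∞ := {p | r p.1 p.2}.indicator fun p => f p.2 * g p.1
  have hF : Measurable F := (by fun_prop : Measurable fun p : α × β => f p.2 * g p.1).indicator hr
  calc ∫⁻ x, (∫⁻ y in {y | r x y}, f y ∂ν) * g x ∂μ
      = ∫⁻ x, ∫⁻ y, F (x, y) ∂ν ∂μ := by
        refine lintegral_congr fun x => ?_
        rw [← lintegral_mul_const _ hf,
          ← lintegral_indicator (s := {y | r x y}) (measurable_prodMk_left hr)]
        rfl
    _ = ∫⁻ y, ∫⁻ x, F (x, y) ∂μ ∂ν :=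
        lintegral_lintegral_swap hF.aemeasurable
    _ = ∫⁻ y, f y * ∫⁻ x in {x | r x y}, g x ∂μ ∂ν := by
        refine lintegral_congr fun y => ?_
        rw [← lintegral_const_mul _ hg,
          ← lintegral_indicator (s := {x | r x y}) (measurable_prodMk_right hr)]
        rfl

end Tonelli

theorem lintegral_Ici_inv_pow_three {m : ℝ} (hm : 0 < m) :
    ∫⁻ u in Ici m, (ENNReal.ofReal (u ^ 3))⁻¹ = ENNReal.ofReal (1 / (2 * m ^ 2)) := by
  have hpow : ∀ u ∈ Ioi m, (ENNReal.ofReal (u ^ 3))⁻¹ = ENNReal.ofReal (u ^ (-3 : ℝ)) := by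
    intro u hu
    have hu0 : 0 < u := hm.trans hu
    rw [← ENNReal.ofReal_inv_of_pos (by positivity), Real.rpow_neg hu0.le]
    norm_cast
  rw [← restrict_Ioi_eq_restrict_Ici, setLIntegral_congr_fun measurableSet_Ioi hpow,
    ← ofReal_integral_eq_lintegral_ofReal (integrableOn_Ioi_rpow_of_lt (by norm_num) hm)
      ((ae_restrict_iff' measurableSet_Ioi).2 (ae_of_all _ fun u hu => by
        have : 0 < u := hm.trans hu; positivity)),
    integral_Ioi_rpow_of_lt (by norm_num) hm]
  congr 1
  rw [show (-3 : ℝ) + 1 = -2 by norm_num, Real.rpow_neg hm.le, Real.rpow_two]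
  field_simp

theorem lintegral_Ioc_one_inv {t : ℝ} (ht : 0 ≤ t) :
    ∫⁻ u in Ioc 1 t, (ENNReal.ofReal u)⁻¹ = ENNReal.ofReal (Real.log t) := by
  rcases le_or_gt t 1 with h | h
  · rw [Ioc_eq_empty h.not_gt, Measure.restrict_empty, lintegral_zero_measure,
      ENNReal.ofReal_of_nonpos (Real.log_nonpos ht h)]
  have hinv : ∀ u ∈ Ioc 1 t, (ENNReal.ofReal u)⁻¹ = ENNReal.ofReal u⁻¹ := fun u hu =>
    (ENNReal.ofReal_inv_of_pos (one_pos.trans hu.1)).symm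
  have hint : IntegrableOn (fun u : ℝ => u⁻¹) (Ioc 1 t) :=
    (intervalIntegrable_iff_integrableOn_Ioc_of_le h.le).1
      (intervalIntegral.intervalIntegrable_inv (fun u hu => by
        rw [uIcc_of_le h.le] at hu; linarith [hu.1]) continuousOn_id)
  rw [setLIntegral_congr_fun measurableSet_Ioc hinv,
    ← ofReal_integral_eq_lintegral_ofReal hint
      ((ae_restrict_iff' measurableSet_Ioc).2 (ae_of_all _ fun u hu => by
        have : 0 < u := one_pos.trans hu.1; positivity)),
    ← intervalIntegral.integral_of_le h.le, integral_inv_of_pos one_pos (one_pos.trans h), div_one]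

theorem sq_mul_one_div_two_mul_max_sq_le (y : ℝ) :
    y ^ 2 * (1 / (2 * max 1 |y| ^ 2)) ≤ min 1 (y ^ 2) := by
  have hM : 1 ≤ max 1 |y| ^ 2 := one_le_pow₀ (le_max_left _ _)
  have hy : y ^ 2 ≤ max 1 |y| ^ 2 := by
    rw [← sq_abs]; exact pow_le_pow_left₀ (abs_nonneg y) (le_max_right _ _) 2
  rw [mul_one_div]
  refine le_min ?_ ?_ <;> rw [div_le_iff₀ (by positivity)] <;> nlinarith [sq_nonneg y]

theorem lintegral_Ioc_setLIntegral_sq_div_pow_three_le (ν : Measure ℝ) [SFinite ν] (b : ℝ) :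
    ∫⁻ u in Ioc 1 b, (∫⁻ y in {y | |y| ≤ u}, ENNReal.ofReal (y ^ 2) ∂ν) / ENNReal.ofReal (u ^ 3)
      ≤ ∫⁻ y, ENNReal.ofReal (min 1 (y ^ 2)) ∂ν := by
  have hsection : ∀ y : ℝ, ∫⁻ u in {u | |y| ≤ u}, (ENNReal.ofReal (u ^ 3))⁻¹
      ∂volume.restrict (Ioc 1 b) ≤ ENNReal.ofReal (1 / (2 * max 1 |y| ^ 2)) := by
    intro y
    rw [Measure.restrict_restrict (s := {u | |y| ≤ u}) measurableSet_Ici,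
      ← lintegral_Ici_inv_pow_three (one_pos.trans_le (le_max_left 1 |y|))]
    exact lintegral_mono_set fun u hu => max_le hu.2.1.le hu.1
  calc _ = ∫⁻ u in Ioc 1 b, (∫⁻ y in {y | |y| ≤ u}, ENNReal.ofReal (y ^ 2) ∂ν)
          * (ENNReal.ofReal (u ^ 3))⁻¹ := by simp only [div_eq_mul_inv]
    _ = ∫⁻ y, ENNReal.ofReal (y ^ 2) * ∫⁻ u in {u | |y| ≤ u}, (ENNReal.ofReal (u ^ 3))⁻¹
          ∂volume.restrict (Ioc 1 b) ∂ν :=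
        lintegral_setLIntegral_mul_swap (r := fun u y => |y| ≤ u)
          (measurableSet_le (by fun_prop) (by fun_prop)) (by fun_prop) (by fun_prop)
    _ ≤ ∫⁻ y, ENNReal.ofReal (y ^ 2) * ENNReal.ofReal (1 / (2 * max 1 |y| ^ 2)) ∂ν :=
        lintegral_mono fun y => mul_le_mul_right (hsection y) _
    _ ≤ _ := lintegral_mono fun y => by
        rw [← ENNReal.ofReal_mul (sq_nonneg y)]
        exact ENNReal.ofReal_le_ofReal (sq_mul_one_div_two_mul_max_sq_le y)

theorem lintegral_Ioc_measure_lt_abs_div_le (ν : Measure ℝ) [SFinite ν] (b : ℝ) :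
    ∫⁻ u in Ioc 1 b, ν {y | u < |y|} / ENNReal.ofReal u
      ≤ ∫⁻ y in {y | 1 < |y|}, ENNReal.ofReal (Real.log |y|) ∂ν := by
  have hsection : ∀ y : ℝ, ∫⁻ u in {u | u < |y|}, (ENNReal.ofReal u)⁻¹
      ∂volume.restrict (Ioc 1 b) ≤ ENNReal.ofReal (Real.log |y|) := by
    intro y
    rw [Measure.restrict_restrict (s := {u | u < |y|}) measurableSet_Iio,
      ← lintegral_Ioc_one_inv (abs_nonneg y)]
    exact lintegral_mono_set fun u hu => ⟨hu.2.1, hu.1.le⟩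
  have hsupport : (fun y : ℝ => ENNReal.ofReal (Real.log |y|)).support ⊆ {y | 1 < |y|} := by
    intro y hy
    by_contra hle
    exact hy (ENNReal.ofReal_of_nonpos (Real.log_nonpos (abs_nonneg y) (not_lt.1 hle)))
  calc _ = ∫⁻ u in Ioc 1 b, (∫⁻ _ in {y | u < |y|}, 1 ∂ν) * (ENNReal.ofReal u)⁻¹ := by
        simp only [setLIntegral_one, div_eq_mul_inv]
    _ = ∫⁻ y, 1 * ∫⁻ u in {u | u < |y|}, (ENNReal.ofReal u)⁻¹ ∂volume.restrict (Ioc 1 b) ∂ν :=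
        lintegral_setLIntegral_mul_swap (r := fun u y => u < |y|)
          (measurableSet_lt (by fun_prop) (by fun_prop)) measurable_const (by fun_prop)
    _ ≤ ∫⁻ y, ENNReal.ofReal (Real.log |y|) ∂ν :=
        lintegral_mono fun y => (one_mul _).trans_le (hsection y)
    _ = _ := (setLIntegral_eq_of_support_subset hsupport).symm

theorem lintegral_ofReal_min_one_sq (ν : Measure ℝ) :
    ∫⁻ y, ENNReal.ofReal (min 1 (y ^ 2)) ∂ν
      = ∫⁻ y in {y | |y| ≤ 1}, ENNReal.ofReal (y ^ 2) ∂ν + ν {y | 1 < |y|} := by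
  have hs : MeasurableSet {y : ℝ | |y| ≤ 1} := measurableSet_le (by fun_prop) (by fun_prop)
  have hcompl : {y : ℝ | |y| ≤ 1}ᶜ = {y | 1 < |y|} := by ext y; simp
  rw [← lintegral_add_compl _ hs, hcompl, ← setLIntegral_one]
  congr 1
  · refine setLIntegral_congr_fun hs fun y hy => ?_
    rw [min_eq_right (by rw [← sq_abs]; exact pow_le_one₀ (abs_nonneg y) hy)]
  · refine setLIntegral_congr_fun (measurableSet_lt (by fun_prop) (by fun_prop)) fun y hy => ?_
    rw [min_eq_left (by rw [← sq_abs]; exact one_le_pow₀ (le_of_lt hy)), ENNReal.ofReal_one]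

theorem lintegral_Ioc_psi_le (ν : Measure ℝ) [SFinite ν] (b : ℝ) :
    ∫⁻ u in Ioc 1 b,
        ((∫⁻ y in {y | |y| ≤ u}, ENNReal.ofReal (y ^ 2) ∂ν) / ENNReal.ofReal (u ^ 3)
          + ν {y | u < |y|} / ENNReal.ofReal u)
      ≤ ∫⁻ y, ENNReal.ofReal (min 1 (y ^ 2)) ∂ν
        + ∫⁻ y in {y | 1 < |y|}, ENNReal.ofReal (Real.log |y|) ∂ν := by
  have hmono : Monotone fun u : ℝ => ∫⁻ y in {y | |y| ≤ u}, ENNReal.ofReal (y ^ 2) ∂ν :=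
    fun u v huv => lintegral_mono_set fun y hy => le_trans hy huv
  have hmeas : Measurable fun u : ℝ =>
      (∫⁻ y in {y | |y| ≤ u}, ENNReal.ofReal (y ^ 2) ∂ν) / ENNReal.ofReal (u ^ 3) :=
    hmono.measurable.div (by fun_prop)
  rw [lintegral_add_left hmeas]
  exact add_le_add (lintegral_Ioc_setLIntegral_sq_div_pow_three_le ν b)
    (lintegral_Ioc_measure_lt_abs_div_le ν b)

theorem integral_le_toReal_of_ofReal_norm_le {α : Type*} [MeasurableSpace α] {μ : Measure α}
    {f : α → ℝ} {g : α → ℝ≥0∞} (hfg : ∀ᵐ x ∂μ, ENNReal.ofReal ‖f x‖ ≤ g x)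
    (hg : ∫⁻ x, g x ∂μ ≠ ∞) : ∫ x, f x ∂μ ≤ (∫⁻ x, g x ∂μ).toReal :=
  (Real.le_norm_self _).trans <|
    (norm_integral_le_lintegral_norm f).trans (ENNReal.toReal_mono hg (lintegral_mono_ae hfg))

theorem ENNReal.ofReal_toReal_div_le (a : ℝ≥0∞) {c : ℝ} (hc : 0 < c) :
    ENNReal.ofReal (a.toReal / c) ≤ a / ENNReal.ofReal c := by
  rw [ENNReal.ofReal_div_of_pos hc]
  exact ENNReal.div_le_div_right ENNReal.ofReal_toReal_le _

theorem setIntegral_sq_eq_toReal_setLIntegral (ν : Measure ℝ) (s : Set ℝ) :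
    ∫ y in s, y ^ 2 ∂ν = (∫⁻ y in s, ENNReal.ofReal (y ^ 2) ∂ν).toReal :=
  integral_eq_lintegral_of_nonneg_ae (ae_of_all _ fun y => sq_nonneg y) (by fun_prop)

theorem ofReal_norm_psi_integrand_le (ν : Measure ℝ) {u : ℝ} (hu : 0 < u) :
    ENNReal.ofReal ‖(∫ y in {y | |y| ≤ u}, y ^ 2 ∂ν) / u ^ 3 + (ν {y | u < |y|}).toReal / u‖
      ≤ (∫⁻ y in {y | |y| ≤ u}, ENNReal.ofReal (y ^ 2) ∂ν) / ENNReal.ofReal (u ^ 3)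
        + ν {y | u < |y|} / ENNReal.ofReal u := by
  rw [setIntegral_sq_eq_toReal_setLIntegral, Real.norm_of_nonneg (by positivity)]
  exact ENNReal.ofReal_add_le.trans (add_le_add (ENNReal.ofReal_toReal_div_le _ (by positivity))
    (ENNReal.ofReal_toReal_div_le _ hu))

theorem integral_psi_bounded_general
    (ν : Measure ℝ) [SigmaFinite ν]
    (hνI : ∫⁻ y : ℝ, ENNReal.ofReal (min 1 (y ^ 2)) ∂ν ≠ ⊤)
    (hlog : ∫⁻ y in {y : ℝ | 1 < |y|}, ENNReal.ofReal (Real.log |y|) ∂ν ≠ ⊤) :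
    (∀ b : ℝ, 1 ≤ b →
      ∫ u in Set.Ioc (1 : ℝ) b,
          ((∫ y in {y : ℝ | |y| ≤ u}, y ^ 2 ∂ν) / u ^ 3
            + (ν {y : ℝ | u < |y|}).toReal / u)
        ≤ 2 * (∫⁻ y in {y : ℝ | 1 < |y|}, ENNReal.ofReal (Real.log |y|) ∂ν).toReal
          + (ν {y : ℝ | 1 < |y|}).toReal
          + ∫ y in {y : ℝ | |y| ≤ 1}, y ^ 2 ∂ν)
    ∧ BddAbove ((fun b : ℝ =>
        ∫ u in Set.Ioc (1 : ℝ) b,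
          ((∫ y in {y : ℝ | |y| ≤ u}, y ^ 2 ∂ν) / u ^ 3
            + (ν {y : ℝ | u < |y|}).toReal / u)) '' Set.Ici 1) := by
  set A := ∫⁻ y in {y : ℝ | 1 < |y|}, ENNReal.ofReal (Real.log |y|) ∂ν
  set B := ν {y : ℝ | 1 < |y|}
  set C := ∫⁻ y in {y : ℝ | |y| ≤ 1}, ENNReal.ofReal (y ^ 2) ∂ν
  have hCB : C + B ≠ ∞ := lintegral_ofReal_min_one_sq ν ▸ hνI
  have hCBA : C + B + A ≠ ∞ := ENNReal.add_ne_top.2 ⟨hCB, hlog⟩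
  have hbound : ∀ b : ℝ, ∫ u in Ioc 1 b, ((∫ y in {y | |y| ≤ u}, y ^ 2 ∂ν) / u ^ 3
      + (ν {y | u < |y|}).toReal / u)
        ≤ 2 * A.toReal + B.toReal + ∫ y in {y | |y| ≤ 1}, y ^ 2 ∂ν := by
    intro b
    have hle := lintegral_ofReal_min_one_sq ν ▸ lintegral_Ioc_psi_le ν b
    calc _ ≤ (∫⁻ u in Ioc 1 b, ((∫⁻ y in {y | |y| ≤ u}, ENNReal.ofReal (y ^ 2) ∂ν)
            / ENNReal.ofReal (u ^ 3) + ν {y | u < |y|} / ENNReal.ofReal u)).toReal :=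
          integral_le_toReal_of_ofReal_norm_le
            (ae_restrict_of_forall_mem measurableSet_Ioc fun u hu =>
              ofReal_norm_psi_integrand_le ν (one_pos.trans hu.1))
            (ne_top_of_le_ne_top hCBA hle)
      _ ≤ (C + B + A).toReal := ENNReal.toReal_mono hCBA hle
      _ = C.toReal + B.toReal + A.toReal := by
          rw [ENNReal.toReal_add hCB hlog, ENNReal.toReal_add (ENNReal.add_ne_top.1 hCB).1
            (ENNReal.add_ne_top.1 hCB).2]
      _ ≤ _ := by
          rw [setIntegral_sq_eq_toReal_setLIntegral]
          linarith [ENNReal.toReal_nonneg (a := A)]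
  exact ⟨fun b _ => hbound b, ⟨_, by rintro _ ⟨b, -, rfl⟩; exact hbound b⟩⟩

/-- Under the logarithmic moment condition, `∫_1^b (ψ₀(u)/u³ + ψ₁(u)/u) du` is bounded
uniformly in `b ≥ 1` by `2∫_{|y|>1} log|y| dν + ν{|y|>1} + ∫_{|y|≤1} y² dν`. -/
theorem integral_psi_bounded
    (ν : Measure ℝ) [SigmaFinite ν]
    (hν0 : ν {0} = 0)
    (hνI : ∫⁻ y : ℝ, ENNReal.ofReal (min 1 (y ^ 2)) ∂ν ≠ ⊤)
    (hlog : ∫⁻ y in {y : ℝ | 1 < |y|}, ENNReal.ofReal (Real.log |y|) ∂ν ≠ ⊤) :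
    (∀ b : ℝ, 1 ≤ b →
      ∫ u in Set.Ioc (1 : ℝ) b,
          ((∫ y in {y : ℝ | |y| ≤ u}, y ^ 2 ∂ν) / u ^ 3
            + (ν {y : ℝ | u < |y|}).toReal / u)
        ≤ 2 * (∫⁻ y in {y : ℝ | 1 < |y|}, ENNReal.ofReal (Real.log |y|) ∂ν).toReal
          + (ν {y : ℝ | 1 < |y|}).toReal
          + ∫ y in {y : ℝ | |y| ≤ 1}, y ^ 2 ∂ν)
    ∧ BddAbove ((fun b : ℝ =>
        ∫ u in Set.Ioc (1 : ℝ) b,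
          ((∫ y in {y : ℝ | |y| ≤ u}, y ^ 2 ∂ν) / u ^ 3
            + (ν {y : ℝ | u < |y|}).toReal / u)) '' Set.Ici 1) :=
  integral_psi_bounded_general ν hνI hlog
end

section
/- Let ν be a Lévy measure on ℝ with ∫_{{|y| > 1}} log|y| ν(dy) < ∞, and let β > 0, γ > 0. Then for every h ∈ ℝ, ∫_0^∞ ( ∫_ℝ ( 1 − cos( e^{−γ s} β h y ) ) ν(dy) ) ds < ∞. (This shows that the Lévy exponent of the invariant law of the one-dimensional Ornstein–Uhlenbeck process driven by the Lévy noise with jump measure ν is finite.) -/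
/-!
Since `1 - cos x ≤ 2 min(1, x²)`, the integrand is dominated by `2 min(1, e^{-2γs} t)` with
`t = (βhy)²`. This saturates at `1` up to time `log⁺ t / (2γ)` and then decays exponentially,
so its time integral is at most `(log⁺ t + min(1, t)) / (2γ)`. After exchanging the order of
integration it remains to integrate `log⁺ (a y)² + min(1, (a y)²)` against `ν`: near `0` this
is `O(y²)`, and for `|y| > 1` it is `O(1) + 2 log |y|`, which is what the Lévy condition and
the logarithmic moment control.
-/

open MeasureTheory Set Real
open scoped ENNReal

lemma Real.one_sub_cos_le_two_mul_min_one_sq (x : ℝ) : 1 - cos x ≤ 2 * min 1 (x ^ 2) := by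
  rcases le_total (x ^ 2) 1 with h | h
  · rw [min_eq_right h]
    nlinarith [one_sub_sq_div_two_le_cos (x := x)]
  · rw [min_eq_left h]
    linarith [neg_one_le_cos x]

lemma Real.mul_exp_neg_posLog {t : ℝ} (ht : 0 ≤ t) : t * exp (-log⁺ t) = min 1 t := by
  rcases le_total t 1 with h | h
  · rw [(posLog_eq_zero_iff t).2 (abs_le.2 ⟨by linarith, h⟩), neg_zero, exp_zero, mul_one,
      min_eq_right h]
  · rw [posLog_eq_log (by rwa [abs_of_nonneg ht]), exp_neg, exp_log (by linarith),
      mul_inv_cancel₀ (by positivity), min_eq_left h]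

lemma lintegral_Ioi_ofReal_mul_exp_neg_mul {t b : ℝ} (ht : 0 ≤ t) (hb : 0 < b) (c : ℝ) :
    ∫⁻ s in Ioi c, ENNReal.ofReal (t * exp (-b * s))
      = ENNReal.ofReal (t * exp (-b * c) / b) := by
  rw [← ofReal_integral_eq_lintegral_ofReal
      ((integrableOn_exp_mul_Ioi (neg_neg_of_pos hb) c).const_mul t)
      (Filter.Eventually.of_forall fun s => by positivity),
    integral_const_mul, integral_exp_mul_Ioi (neg_neg_of_pos hb), neg_div_neg_eq, mul_div_assoc]

lemma lintegral_Ioi_min_one_mul_exp_neg_mul_le {t b : ℝ} (ht : 0 ≤ t) (hb : 0 < b) :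
    ∫⁻ s in Ioi 0, ENNReal.ofReal (min 1 (t * exp (-b * s)))
      ≤ ENNReal.ofReal b⁻¹ * ENNReal.ofReal (log⁺ t + min 1 t) := by
  set L := log⁺ t / b
  have hL : 0 ≤ L := div_nonneg posLog_nonneg hb.le
  calc ∫⁻ s in Ioi 0, ENNReal.ofReal (min 1 (t * exp (-b * s)))
      ≤ (∫⁻ _ in Ioc 0 L, 1) + ∫⁻ s in Ioi L, ENNReal.ofReal (t * exp (-b * s)) := by
        rw [← Ioc_union_Ioi_eq_Ioi hL]
        refine (lintegral_union_le _ _ _).trans (add_le_add ?_ ?_) <;>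
          refine lintegral_mono fun s => ?_
        · exact ENNReal.ofReal_le_one.2 (min_le_left _ _)
        · exact ENNReal.ofReal_le_ofReal (min_le_right _ _)
    _ = ENNReal.ofReal L + ENNReal.ofReal (min 1 t / b) := by
        rw [setLIntegral_const, one_mul, volume_Ioc, sub_zero,
          lintegral_Ioi_ofReal_mul_exp_neg_mul ht hb,
          show -b * L = -log⁺ t by simp only [L]; field_simp, mul_exp_neg_posLog ht]
    _ = _ := by
        rw [← ENNReal.ofReal_add (by positivity) (by positivity),
          ← ENNReal.ofReal_mul (by positivity)]
        congr 1
        simp only [L]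
        ring

lemma posLog_sq_add_min_one_sq_le (a y : ℝ) :
    log⁺ ((a * y) ^ 2) + min 1 ((a * y) ^ 2)
      ≤ (2 * a ^ 2 + log⁺ (a ^ 2) + 1) * min 1 (y ^ 2) + 2 * log⁺ y := by
  rcases le_or_gt |y| 1 with hy | hy
  · rw [min_eq_right ((sq_le_one_iff_abs_le_one y).2 hy), (posLog_eq_zero_iff y).2 hy]
    have hlog : log⁺ ((a * y) ^ 2) ≤ (a * y) ^ 2 :=
      max_le (by positivity) (log_le_self (by positivity))
    nlinarith [min_le_right 1 ((a * y) ^ 2), posLog_nonneg (x := a ^ 2), sq_nonneg y]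
  · have hlog : log⁺ ((a * y) ^ 2) ≤ log⁺ (a ^ 2) + 2 * log⁺ y :=
      calc log⁺ ((a * y) ^ 2) = log⁺ (a ^ 2 * y ^ 2) := by ring_nf
        _ ≤ log⁺ (a ^ 2) + log⁺ (y ^ 2) := posLog_mul
        _ = log⁺ (a ^ 2) + 2 * log⁺ y := by rw [posLog_pow 2 y]; norm_num
    rw [min_eq_left ((one_le_sq_iff_one_le_abs y).2 hy.le)]
    nlinarith [min_le_left 1 ((a * y) ^ 2), sq_nonneg a]

lemma lintegral_ofReal_posLog_eq_setLIntegral_log_abs (ν : Measure ℝ) :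
    ∫⁻ y, ENNReal.ofReal (log⁺ y) ∂ν
      = ∫⁻ y in {y : ℝ | 1 < |y|}, ENNReal.ofReal (log |y|) ∂ν := by
  rw [← lintegral_indicator (measurableSet_lt measurable_const continuous_abs.measurable)]
  congr 1 with y
  by_cases hy : 1 < |y|
  · rw [indicator_of_mem (show y ∈ {y : ℝ | 1 < |y|} from hy), ← posLog_abs,
      posLog_eq_log (by rw [abs_abs]; exact hy.le)]
  · rw [indicator_of_notMem (show y ∉ {y : ℝ | 1 < |y|} from hy),
      (posLog_eq_zero_iff y).2 (not_lt.1 hy), ENNReal.ofReal_zero]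

lemma lintegral_posLog_sq_add_min_one_sq_ne_top {ν : Measure ℝ}
    (hνI : ∫⁻ y : ℝ, ENNReal.ofReal (min 1 (y ^ 2)) ∂ν ≠ ⊤)
    (hlog : ∫⁻ y in {y : ℝ | 1 < |y|}, ENNReal.ofReal (log |y|) ∂ν ≠ ⊤) (a : ℝ) :
    ∫⁻ y, ENNReal.ofReal (log⁺ ((a * y) ^ 2) + min 1 ((a * y) ^ 2)) ∂ν ≠ ⊤ := by
  set K := 2 * a ^ 2 + log⁺ (a ^ 2) + 1
  have hK : 0 ≤ K := by linarith [sq_nonneg a, posLog_nonneg (x := a ^ 2)]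
  have hbound : ∀ y, ENNReal.ofReal (log⁺ ((a * y) ^ 2) + min 1 ((a * y) ^ 2))
      ≤ ENNReal.ofReal K * ENNReal.ofReal (min 1 (y ^ 2)) + 2 * ENNReal.ofReal (log⁺ y) :=
    fun y => by
      refine (ENNReal.ofReal_le_ofReal (posLog_sq_add_min_one_sq_le a y)).trans ?_
      rw [← ENNReal.ofReal_mul hK, ← ENNReal.ofReal_ofNat 2,
        ← ENNReal.ofReal_mul zero_le_two]
      exact ENNReal.ofReal_add_le
  refine ne_top_of_le_ne_top ?_ (lintegral_mono hbound)
  rw [lintegral_add_left (by fun_prop), lintegral_const_mul' _ _ ENNReal.ofReal_ne_top,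
    lintegral_const_mul' _ _ (by simp), lintegral_ofReal_posLog_eq_setLIntegral_log_abs]
  exact ENNReal.add_ne_top.2 ⟨ENNReal.mul_ne_top ENNReal.ofReal_ne_top hνI,
    ENNReal.mul_ne_top (by simp) hlog⟩

theorem invariant_exponent_finite_general
    (ν : Measure ℝ) [SigmaFinite ν]
    (hνI : ∫⁻ y : ℝ, ENNReal.ofReal (min 1 (y ^ 2)) ∂ν ≠ ⊤)
    (hlog : ∫⁻ y in {y : ℝ | 1 < |y|}, ENNReal.ofReal (Real.log |y|) ∂ν ≠ ⊤)
    (β γ : ℝ) (hγ : 0 < γ) :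
    ∀ h : ℝ,
      ∫⁻ s in Set.Ioi (0 : ℝ),
          (∫⁻ y : ℝ, ENNReal.ofReal (1 - Real.cos (Real.exp (-γ * s) * β * h * y)) ∂ν)
        ≠ ⊤ := by
  intro h
  have hcos : ∀ s y, ENNReal.ofReal (1 - cos (exp (-γ * s) * β * h * y))
      ≤ 2 * ENNReal.ofReal (min 1 ((β * h * y) ^ 2 * exp (-(2 * γ) * s))) := fun s y => by
    rw [← ENNReal.ofReal_ofNat 2, ← ENNReal.ofReal_mul zero_le_two]
    refine ENNReal.ofReal_le_ofReal ((one_sub_cos_le_two_mul_min_one_sq _).trans_eq ?_)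
    rw [show -(2 * γ) * s = -γ * s + -γ * s by ring, exp_add]
    ring_nf
  have htime : ∀ y,
      ∫⁻ s in Ioi 0, 2 * ENNReal.ofReal (min 1 ((β * h * y) ^ 2 * exp (-(2 * γ) * s)))
      ≤ 2 * (ENNReal.ofReal (2 * γ)⁻¹
        * ENNReal.ofReal (log⁺ ((β * h * y) ^ 2) + min 1 ((β * h * y) ^ 2))) := fun y => by
    rw [lintegral_const_mul' _ _ (by simp)]
    gcongr
    exact lintegral_Ioi_min_one_mul_exp_neg_mul_le (sq_nonneg _) (by positivity)
  refine ne_top_of_le_ne_top ?_ (lintegral_mono fun s => lintegral_mono fun y => hcos s y)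
  rw [lintegral_lintegral_swap (by fun_prop)]
  refine ne_top_of_le_ne_top ?_ (lintegral_mono htime)
  rw [lintegral_const_mul' _ _ (by simp), lintegral_const_mul' _ _ ENNReal.ofReal_ne_top]
  exact ENNReal.mul_ne_top (by simp) (ENNReal.mul_ne_top ENNReal.ofReal_ne_top
    (lintegral_posLog_sq_add_min_one_sq_ne_top hνI hlog (β * h)))

/-- Under the logarithmic moment condition, the Lévy exponent of the invariant law of the
one-dimensional Ornstein–Uhlenbeck process is finite:
`∫_0^∞ ∫_ℝ (1 − cos(e^{−γs} β h y)) dν ds < ∞` for every `h`. -/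
theorem invariant_exponent_finite
    (ν : Measure ℝ) [SigmaFinite ν]
    (hν0 : ν {0} = 0)
    (hνI : ∫⁻ y : ℝ, ENNReal.ofReal (min 1 (y ^ 2)) ∂ν ≠ ⊤)
    (hlog : ∫⁻ y in {y : ℝ | 1 < |y|}, ENNReal.ofReal (Real.log |y|) ∂ν ≠ ⊤)
    (β γ : ℝ) (hβ : 0 < β) (hγ : 0 < γ) :
    ∀ h : ℝ,
      ∫⁻ s in Set.Ioi (0 : ℝ),
          (∫⁻ y : ℝ, ENNReal.ofReal (1 - Real.cos (Real.exp (-γ * s) * β * h * y)) ∂ν)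
        ≠ ⊤ :=
  invariant_exponent_finite_general ν hνI hlog β γ hγ
end
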